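/- Let X be an N×P real matrix such that XᵀX is invertible and y ∈ ℝᴺ. Define the iteration β⁽ᵏ⁺¹⁾ = β⁽ᵏ⁾ + δ Xᵀ(y − Xβ⁽ᵏ⁾) with β⁽⁰⁾ = 0. If 0 < δ < 2/S(XᵀX), where S(XᵀX) is the spectral radius of XᵀX, then β⁽ᵏ⁾ converges to the ordinary least squares solution (XᵀX)⁻¹Xᵀy as k → ∞. -/

import Mathlib

/-!
With `β̂ = (XᵀX)⁻¹Xᵀy` we have `XᵀX β̂ = Xᵀy`, so the error `β k - β̂` is multiplied by the
symmetric matrix `1 - δ XᵀX` at every step. Its spectrum is `1 - δ σ(XᵀX)`, and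
`0 < μ ≤ S(XᵀX) < 2 / δ` for every `μ ∈ σ(XᵀX)`, so it lies in `(-1, 1)`. Diagonalizing, the
powers of `1 - δ XᵀX` tend to zero, hence so does the error.
-/

open Matrix Filter

/-- Spectral radius of a real matrix: sup of absolute values of its real spectrum. -/
noncomputable def specRad {P : ℕ} (A : Matrix (Fin P) (Fin P) ℝ) : ℝ :=
  sSup {r : ℝ | ∃ μ ∈ spectrum ℝ A, r = |μ|}

open Topology

open scoped Pointwise in
theorem spectrum_one_sub_smul {R A : Type*} [Field R] [Ring A] [Algebra R A] {c : R} (hc : c ≠ 0)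
    (a : A) : spectrum R (1 - c • a) = {1} - c • spectrum R a := by
  have hsmul := spectrum.unit_smul_eq_smul a (Units.mk0 c hc)
  rw [Units.smul_def, Units.smul_def, Units.val_mk0] at hsmul
  rw [← hsmul, spectrum.singleton_sub_eq, map_one]

namespace Matrix

variable {𝕜 n : Type*} [RCLike 𝕜] [Fintype n] [DecidableEq n]

theorem IsHermitian.tendsto_pow_atTop_nhds_zero {A : Matrix n n 𝕜} (hA : A.IsHermitian)
    (h : spectrum ℝ A ⊆ Metric.ball 0 1) : Tendsto (A ^ ·) atTop (𝓝 0) := by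
  set conj := Unitary.conjStarAlgAut 𝕜 (Matrix n n 𝕜) hA.eigenvectorUnitary
  have hconj : Continuous conj := by
    have hU : ⇑conj = fun B ↦
        hA.eigenvectorUnitary * B * star (hA.eigenvectorUnitary : Matrix n n 𝕜) :=
      funext fun B ↦ Unitary.conjStarAlgAut_apply _ _
    rw [hU]
    fun_prop
  have hpow : ∀ k, A ^ k = conj (diagonal fun i ↦ (hA.eigenvalues i : 𝕜) ^ k) := fun k ↦ by
    conv_lhs => rw [hA.spectral_theorem]
    rw [← map_pow, diagonal_pow]
    rfl
  have hdiag : Tendsto (fun k ↦ diagonal fun i ↦ (hA.eigenvalues i : 𝕜) ^ k) atTop (𝓝 0) := by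
    rw [← diagonal_zero]
    refine (continuous_id.matrix_diagonal.tendsto _).comp (tendsto_pi_nhds.2 fun i ↦ ?_)
    refine tendsto_pow_atTop_nhds_zero_of_norm_lt_one ?_
    simpa using h (hA.eigenvalues_mem_spectrum_real i)
  simpa [Function.comp_def, ← hpow] using (hconj.tendsto 0).comp hdiag

theorem eq_pow_mulVec_of_succ_eq_mulVec {R : Type*} [CommSemiring R] {M : Matrix n n R}
    {e : ℕ → n → R} (he : ∀ k, e (k + 1) = M *ᵥ e k) (k : ℕ) : e k = (M ^ k) *ᵥ e 0 := by
  induction k with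
  | zero => rw [pow_zero, one_mulVec]
  | succ k ih => rw [he, ih, pow_succ', mulVec_mulVec]

theorem tendsto_nhds_zero_of_succ_eq_mulVec {R : Type*} [CommSemiring R] [TopologicalSpace R]
    [IsTopologicalSemiring R] {M : Matrix n n R} (hM : Tendsto (M ^ ·) atTop (𝓝 0))
    {e : ℕ → n → R} (he : ∀ k, e (k + 1) = M *ᵥ e k) : Tendsto e atTop (𝓝 0) := by
  have hmul := ((continuous_id.matrix_mulVec (continuous_const (y := e 0))).tendsto 0).comp hM
  simpa [Function.comp_def, ← eq_pow_mulVec_of_succ_eq_mulVec he] using hmul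

end Matrix

theorem abs_le_specRad {P : ℕ} {A : Matrix (Fin P) (Fin P) ℝ} {μ : ℝ} (hμ : μ ∈ spectrum ℝ A) :
    |μ| ≤ specRad A := by
  refine le_csSup ?_ ⟨μ, hμ, rfl⟩
  have himage : {r : ℝ | ∃ μ ∈ spectrum ℝ A, r = |μ|} = (|·|) '' spectrum ℝ A := by
    ext r; simp [eq_comm]
  rw [himage]
  exact (A.finite_spectrum.image _).bddAbove

theorem Matrix.pos_of_mem_spectrum_transpose_mul_self {m n : Type*} [Fintype m] [Fintype n]
    [DecidableEq n] {X : Matrix m n ℝ} (hX : IsUnit (Xᵀ * X)) {μ : ℝ} (hμ : μ ∈ spectrum ℝ (Xᵀ * X)) : 0 < μ := by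
  have hpsd : (Xᵀ * X).PosSemidef := by
    simpa using posSemidef_conjTranspose_mul_self X
  obtain ⟨i, rfl⟩ := hpsd.1.spectrum_real_eq_range_eigenvalues ▸ hμ
  refine (hpsd.eigenvalues_nonneg i).lt_of_ne' fun h0 ↦ ?_
  exact (spectrum.zero_mem_iff ℝ).1 (h0 ▸ hμ) hX

theorem spectrum_one_sub_smul_transpose_mul_self_subset_ball {N P : ℕ}
    {X : Matrix (Fin N) (Fin P) ℝ} (hinv : IsUnit (Xᵀ * X)) {δ : ℝ} (hδ0 : 0 < δ)
    (hδ1 : δ < 2 / specRad (Xᵀ * X)) : spectrum ℝ (1 - δ • (Xᵀ * X)) ⊆ Metric.ball 0 1 := by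
  rw [spectrum_one_sub_smul hδ0.ne']
  rintro _ ⟨_, rfl, _, ⟨μ, hμ, rfl⟩, rfl⟩
  have hμ0 := pos_of_mem_spectrum_transpose_mul_self hinv hμ
  have hμS := (le_abs_self μ).trans (abs_le_specRad hμ)
  have hδμ : δ * μ < 2 :=
    calc δ * μ ≤ δ * specRad (Xᵀ * X) := by gcongr
      _ < 2 := (lt_div_iff₀ (hμ0.trans_le hμS)).1 hδ1
  simp only [Metric.mem_ball, dist_zero_right, Real.norm_eq_abs, smul_eq_mul, abs_lt]
  constructor <;> nlinarith

theorem stmt0_general {N P : ℕ} (X : Matrix (Fin N) (Fin P) ℝ) (y : Fin N → ℝ)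
    (hinv : IsUnit (Xᵀ * X)) (δ : ℝ)
    (hδ0 : 0 < δ) (hδ1 : δ < 2 / specRad (Xᵀ * X))
    (β : ℕ → Fin P → ℝ)
    (hrec : ∀ k, β (k + 1) = β k + δ • (Xᵀ.mulVec (y - X.mulVec (β k)))) :
    Tendsto β atTop (nhds ((Xᵀ * X)⁻¹.mulVec (Xᵀ.mulVec y))) := by
  set βₒ := (Xᵀ * X)⁻¹ *ᵥ Xᵀ *ᵥ y
  have hnormal : Xᵀ *ᵥ X *ᵥ βₒ = Xᵀ *ᵥ y := by
    rw [mulVec_mulVec, mulVec_mulVec, mul_nonsing_inv _ ((isUnit_iff_isUnit_det _).1 hinv),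
      one_mulVec]
  have herr : ∀ k, β (k + 1) - βₒ = (1 - δ • (Xᵀ * X)) *ᵥ (β k - βₒ) := fun k ↦ by
    simp only [hrec, sub_mulVec, one_mulVec, smul_mulVec, ← mulVec_mulVec, mulVec_sub, hnormal]
    module
  have hgram : (Xᵀ * X).IsHermitian := by simpa using isHermitian_conjTranspose_mul_self X
  have hherm : (1 - δ • (Xᵀ * X)).IsHermitian :=
    isHermitian_one.sub (hgram.smul (IsSelfAdjoint.all δ))
  have hpow := hherm.tendsto_pow_atTop_nhds_zero
    (spectrum_one_sub_smul_transpose_mul_self_subset_ball hinv hδ0 hδ1)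
  rw [← tendsto_sub_nhds_zero_iff]
  exact tendsto_nhds_zero_of_succ_eq_mulVec hpow herr

theorem stmt0 {N P : ℕ} (X : Matrix (Fin N) (Fin P) ℝ) (y : Fin N → ℝ)
    (hinv : IsUnit (Xᵀ * X)) (δ : ℝ)
    (hδ0 : 0 < δ) (hδ1 : δ < 2 / specRad (Xᵀ * X))
    (β : ℕ → Fin P → ℝ) (h0 : β 0 = 0)
    (hrec : ∀ k, β (k + 1) = β k + δ • (Xᵀ.mulVec (y - X.mulVec (β k)))) :
    Tendsto β atTop (nhds ((Xᵀ * X)⁻¹.mulVec (Xᵀ.mulVec y))) :=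
  stmt0_general X y hinv δ hδ0 hδ1 β hrec
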